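/- Let Φ : [0,∞) → [0,∞) be continuous, convex, with Φ(0) = 0, and define Ψ(s) := inf{ ∫_{ℝ³} ((1/2)|v|² g(v) + Φ(g(v))) dv : g ∈ L¹₊(ℝ³), ∫ g dv = s } for s ≥ 0. Then the Legendre transforms satisfy, for every λ ∈ ℝ, the identity Ψ̄(λ) = ∫_{ℝ³} Φ̄(λ - (1/2)|v|²) dv, where for a function h : [0,∞) → ℝ the Legendre transform is h̄(λ) := sup_{r ≥ 0} (λ r - h(r)). -/

import Mathlib

open MeasureTheory Filter Topology Set ENNReal

noncomputable section

/-- Physical space `ℝ³`. -/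
abbrev R3 : Type := EuclideanSpace ℝ (Fin 3)

/-- Spatial density `ρ_f(x) = ∫ f(x,v) dv` induced by a phase-space density. -/
def spatialDensity (f : R3 × R3 → ℝ) (x : R3) : ℝ := ∫ v, f (x, v)

/-- Kinetic energy `E_kin(f) = (1/2)∫∫ |v|² f dv dx`. -/
def Ekin (f : R3 × R3 → ℝ) : ℝ := (1/2) * ∫ p : R3 × R3, ‖p.2‖ ^ 2 * f p

/-- `D(σ) = ∫∫ σ(x)σ(y)/|x-y| dx dy`. -/
def Dpair (σ : R3 → ℝ) : ℝ := ∫ x, ∫ y, σ x * σ y / ‖x - y‖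

/-- Potential energy `E_pot(ρ) = -(1/2)∫∫ ρ(x)ρ(y)/|x-y| dx dy`. -/
def Epot (ρ : R3 → ℝ) : ℝ := -(1/2) * Dpair ρ

/-- Casimir functional `C(f) = ∫∫ Φ(f) dv dx`. -/
def Casimir (Φ : ℝ → ℝ) (f : R3 × R3 → ℝ) : ℝ := ∫ p, Φ (f p)

/-- Energy-Casimir functional `H_C = E_kin + E_pot + C`. -/
def HC (Φ : ℝ → ℝ) (f : R3 × R3 → ℝ) : ℝ :=
  Ekin f + Epot (spatialDensity f) + Casimir Φ f

/-- Membership in the constraint set `F_M`. -/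
structure MemFM (Φ : ℝ → ℝ) (M : ℝ) (f : R3 × R3 → ℝ) : Prop where
  nonneg : ∀ p, 0 ≤ f p
  integrable : Integrable f
  mass : (∫ p, f p) = M
  kin_int : Integrable (fun p : R3 × R3 => ‖p.2‖ ^ 2 * f p)
  cas_int : Integrable (fun p => Φ (f p))

/-- The constraint set `F_M`. -/
def FMset (Φ : ℝ → ℝ) (M : ℝ) : Set ((R3 × R3) → ℝ) := {f | MemFM Φ M f}

/-- Hypotheses (Φ1)-(Φ3) on the Casimir function `Φ`, with derivative `Φ'`
and growth exponents `k`, `k'`. -/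
structure IsPhi (Φ Φ' : ℝ → ℝ) (k k' : ℝ) : Prop where
  zero : Φ 0 = 0
  deriv_zero : Φ' 0 = 0
  hasDeriv : ∀ s ∈ Ici (0:ℝ), HasDerivAt Φ (Φ' s) s
  derivCont : ContinuousOn Φ' (Ici 0)
  nonneg : ∀ s ∈ Ici (0:ℝ), 0 ≤ Φ s
  sconvex : StrictConvexOn ℝ (Ici 0) Φ
  k_pos : 0 < k
  k_lt : k < 3/2
  k'_pos : 0 < k'
  k'_lt : k' < 3/2
  growth_large : ∃ C > 0, ∃ F₁ > 0, ∀ s, F₁ ≤ s → C * s ^ (1 + 1/k) ≤ Φ s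
  growth_small : ∃ C > 0, ∃ F₂ > 0, ∀ s, 0 ≤ s → s ≤ F₂ → Φ s ≤ C * s ^ (1 + 1/k')

/-- Potential `U_ρ(x) = -∫ ρ(y)/|x-y| dy` induced by a spatial density. -/
def U0rho (ρ : R3 → ℝ) (x : R3) : ℝ := -∫ y, ρ y / ‖x - y‖

/-- Particle energy `E(x,v) = (1/2)|v|² + U₀(x)` for the state `f₀`. -/
def Epart (f₀ : R3 × R3 → ℝ) (p : R3 × R3) : ℝ :=
  (1/2) * ‖p.2‖ ^ 2 + U0rho (spatialDensity f₀) p.1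

/-- Reduced density function `Ψ(s)`, obtained from `Φ` by minimizing the sum of kinetic
energy density and Casimir density over all velocity profiles of total mass `s`. -/
def PsiOf (Φ : ℝ → ℝ) (s : ℝ) : ℝ :=
  sInf { r : ℝ | ∃ g : R3 → ℝ, (∀ v, 0 ≤ g v) ∧ Integrable g ∧ (∫ v, g v) = s ∧
    Integrable (fun v => (1/2) * ‖v‖ ^ 2 * g v + Φ (g v)) ∧
    r = ∫ v, ((1/2) * ‖v‖ ^ 2 * g v + Φ (g v)) }

/-- Reduced functional `H_r(ρ) = ∫ Ψ(ρ) dx + E_pot(ρ)`. -/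
def Hr (Ψ : ℝ → ℝ) (ρ : R3 → ℝ) : ℝ := (∫ x, Ψ (ρ x)) + Epot ρ

/-- Membership in the reduced constraint set `R_M`. -/
structure MemRM (Ψ : ℝ → ℝ) (M : ℝ) (ρ : R3 → ℝ) : Prop where
  nonneg : ∀ x, 0 ≤ ρ x
  integrable : Integrable ρ
  mass : (∫ x, ρ x) = M
  psi_int : Integrable (fun x => Ψ (ρ x))

/-- The reduced constraint set `R_M`. -/
def RMset (Ψ : ℝ → ℝ) (M : ℝ) : Set (R3 → ℝ) := {ρ | MemRM Ψ M ρ}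

/-- Hypotheses (Ψ1)-(Ψ3) on `Ψ`, with derivative `Ψ'` and growth exponents `n`, `n'`. -/
structure IsPsi (Ψ Ψ' : ℝ → ℝ) (n n' : ℝ) : Prop where
  zero : Ψ 0 = 0
  deriv_zero : Ψ' 0 = 0
  hasDeriv : ∀ s ∈ Ici (0:ℝ), HasDerivAt Ψ (Ψ' s) s
  derivCont : ContinuousOn Ψ' (Ici 0)
  nonneg : ∀ s ∈ Ici (0:ℝ), 0 ≤ Ψ s
  sconvex : StrictConvexOn ℝ (Ici 0) Ψ
  n_pos : 0 < n
  n_lt : n < 3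
  n'_pos : 0 < n'
  n'_lt : n' < 3
  growth_large : ∃ C > 0, ∃ s₁ > 0, ∀ s, s₁ ≤ s → C * s ^ (1 + 1/n) ≤ Ψ s
  growth_small : ∃ C > 0, ∃ s₂ > 0, ∀ s, 0 ≤ s → s ≤ s₂ → Ψ s ≤ C * s ^ (1 + 1/n')

/-- Relative "distance" `d(f,f₀) = ∫∫ [Φ(f) - Φ(f₀) + E (f - f₀)] dv dx`. -/
def dVP (Φ : ℝ → ℝ) (f₀ f : R3 × R3 → ℝ) : ℝ :=
  ∫ p, (Φ (f p) - Φ (f₀ p) + Epart f₀ p * (f p - f₀ p))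

/-- Legendre transform `h̄(λ) = sup_{r ≥ 0} (λ r - h(r))`, valued in `ℝ≥0∞`
(it is nonnegative since `h(0) = 0`, and possibly `+∞`). -/
def legendre (h : ℝ → ℝ) (l : ℝ) : ℝ≥0∞ :=
  ⨆ r : Ici (0:ℝ), ENNReal.ofReal (l * (r : ℝ) - h (r : ℝ))

/-!
Write `μ v = λ - ½|v|²`. For a profile `g ≥ 0` of mass `s`,
`λ s - ∫ (½|v|² g + Φ g) = ∫ (μ g - Φ g)`, so `Ψ̄ λ` is the supremum of `∫ (μ g - Φ g)` over all
admissible profiles, and the pointwise Fenchel–Young inequality bounds it by `∫ Φ̄ (μ v) dv`.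
Conversely the supremum may be taken inside the integral: by continuity of `Φ`, `Φ̄ t` is the
supremum of `t c - Φ c` over a dense sequence of `c ≥ 0`; maximising over its first `N` terms
pointwise gives a measurable profile, and cutting it off outside the `N`-th compact set of an
exhaustion, monotone convergence in `N` gives `∫ Φ̄ (μ v) dv ≤ Ψ̄ λ`.
-/

theorem ofReal_sub_le_legendre (h : ℝ → ℝ) (t : ℝ) {r : ℝ} (hr : 0 ≤ r) :
    ENNReal.ofReal (t * r - h r) ≤ legendre h t :=
  le_iSup_of_le ⟨r, hr⟩ le_rfl

theorem ofReal_integral_le_lintegral_ofReal {X : Type*} [MeasurableSpace X] {m : Measure X}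
    {f : X → ℝ} (hf : Integrable f m) :
    ENNReal.ofReal (∫ x, f x ∂m) ≤ ∫⁻ x, ENNReal.ofReal (f x) ∂m :=
  calc ENNReal.ofReal (∫ x, f x ∂m)
      ≤ ENNReal.ofReal (∫ x, max (f x) 0 ∂m) :=
        ENNReal.ofReal_le_ofReal (integral_mono hf hf.pos_part fun x => le_max_left _ _)
    _ = ∫⁻ x, ENNReal.ofReal (max (f x) 0) ∂m :=
        ofReal_integral_eq_lintegral_ofReal hf.pos_part (ae_of_all _ fun x => le_max_right _ _)
    _ = ∫⁻ x, ENNReal.ofReal (f x) ∂m := by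
        simp_rw [ENNReal.ofReal_max, ENNReal.ofReal_zero, max_zero]

/-- The Fenchel–Young inequality `t r - h r ≤ h̄ t`, integrated. -/
theorem ofReal_integral_le_lintegral_legendre {X : Type*} [MeasurableSpace X] (m : Measure X)
    (h : ℝ → ℝ) (μ : X → ℝ) {g : X → ℝ} (hg : ∀ x, 0 ≤ g x)
    (hf : Integrable (fun x => μ x * g x - h (g x)) m) :
    ENNReal.ofReal (∫ x, μ x * g x - h (g x) ∂m) ≤ ∫⁻ x, legendre h (μ x) ∂m :=
  (ofReal_integral_le_lintegral_ofReal hf).trans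
    (lintegral_mono fun x => ofReal_sub_le_legendre h (μ x) (hg x))

/-- `c 0 = 0` makes the truncations `legendreTrunc h c N` below nonnegative. -/
theorem exists_seq_legendre_eq_iSup {h : ℝ → ℝ} (hcont : ContinuousOn h (Ici 0)) :
    ∃ c : ℕ → ℝ, c 0 = 0 ∧ (∀ k, 0 ≤ c k) ∧
      ∀ t, legendre h t = ⨆ k, ENNReal.ofReal (t * c k - h (c k)) := by
  let d := TopologicalSpace.denseSeq (Ici (0:ℝ))
  let c : ℕ → ℝ := fun k => Nat.casesOn k 0 fun k => (d k : ℝ)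
  have hc : ∀ k, 0 ≤ c k := fun k => by cases k; exacts [le_rfl, (d _).2]
  refine ⟨c, rfl, hc, fun t => le_antisymm ?_ (iSup_le fun k => ofReal_sub_le_legendre h t (hc k))⟩
  have hF : Continuous fun r : Ici (0:ℝ) => ENNReal.ofReal (t * r - h r) :=
    ENNReal.continuous_ofReal.comp
      ((continuous_const.mul continuous_subtype_val).sub hcont.domRestrict)
  rw [legendre, ← (TopologicalSpace.denseRange_denseSeq _).ciSup' hF]
  exact iSup_le fun ⟨_, k, rfl⟩ => le_iSup_of_le (k + 1) le_rfl

def legendreTrunc (h : ℝ → ℝ) (c : ℕ → ℝ) (N : ℕ) (t : ℝ) : ℝ :=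
  (Finset.range (N + 1)).sup' Finset.nonempty_range_add_one fun k => t * c k - h (c k)

section LegendreTrunc

variable {h : ℝ → ℝ} {c : ℕ → ℝ}

theorem legendreTrunc_nonneg (hzero : h 0 = 0) (hc0 : c 0 = 0) (N : ℕ) (t : ℝ) :
    0 ≤ legendreTrunc h c N t := by
  refine le_trans ?_ (Finset.le_sup' _ (Finset.mem_range.2 N.succ_pos))
  simp [hc0, hzero]

theorem legendreTrunc_mono (t : ℝ) : Monotone fun N => legendreTrunc h c N t :=
  fun _ _ hMN => Finset.sup'_mono _ (Finset.range_subset_range.2 (by omega)) _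

theorem continuous_legendreTrunc (N : ℕ) : Continuous (legendreTrunc h c N) :=
  Continuous.finset_sup'_apply _ fun _ _ => by fun_prop

theorem legendreTrunc_eq_of_isMax {N κ : ℕ} {t : ℝ} (hκ : κ ≤ N)
    (hmax : ∀ j ≤ N, t * c j - h (c j) ≤ t * c κ - h (c κ)) :
    legendreTrunc h c N t = t * c κ - h (c κ) :=
  le_antisymm (Finset.sup'_le _ _ fun j hj => hmax j (Finset.mem_range_succ_iff.1 hj))
    (Finset.le_sup' (fun k => t * c k - h (c k)) (Finset.mem_range_succ_iff.2 hκ))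

theorem iSup_ofReal_legendreTrunc (hc : ∀ k, 0 ≤ c k)
    (hleg : ∀ t, legendre h t = ⨆ k, ENNReal.ofReal (t * c k - h (c k))) (t : ℝ) :
    ⨆ N, ENNReal.ofReal (legendreTrunc h c N t) = legendre h t := by
  refine le_antisymm (iSup_le fun N => ?_) ?_
  · obtain ⟨k, -, hk⟩ := Finset.exists_mem_eq_sup' Finset.nonempty_range_add_one
      fun k => t * c k - h (c k)
    rw [legendreTrunc, hk]
    exact ofReal_sub_le_legendre h t (hc k)
  · rw [hleg]
    exact iSup_le fun k => le_iSup_of_le k <| ENNReal.ofReal_le_ofReal <|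
      Finset.le_sup' (fun k => t * c k - h (c k)) (Finset.self_mem_range_succ k)

end LegendreTrunc

theorem exists_measurable_isMaxOn_range {X : Type*} [MeasurableSpace X] (F : X → ℕ → ℝ)
    (hF : ∀ k, Measurable fun x => F x k) (N : ℕ) :
    ∃ κ : X → ℕ, Measurable κ ∧ ∀ x, κ x ≤ N ∧ ∀ j ≤ N, F x j ≤ F x (κ x) := by
  classical
  have hex : ∀ x, ∃ k, k ≤ N ∧ ∀ j ≤ N, F x j ≤ F x k := fun x => by
    obtain ⟨k, hk, hmax⟩ := (Finset.range (N + 1)).exists_max_image (F x)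
      Finset.nonempty_range_add_one
    exact ⟨k, Finset.mem_range_succ_iff.1 hk,
      fun j hj => hmax j (Finset.mem_range_succ_iff.2 hj)⟩
  refine ⟨fun x => Nat.find (hex x), measurable_find hex fun k => ?_,
    fun x => Nat.find_spec (hex x)⟩
  simp only [ofPred_and, ofPred_forall]
  exact (MeasurableSet.const _).inter <| .iInter fun j => .iInter fun _ =>
    measurableSet_le (hF j) (hF k)

section Interchange

variable {X : Type*} [TopologicalSpace X] [MeasurableSpace X] [OpensMeasurableSpace X]
  [T2Space X] (m : Measure X) [IsFiniteMeasureOnCompacts m]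
  {h : ℝ → ℝ} {μ : X → ℝ} {A : ℝ≥0∞}

/-- On a compact set the truncated transform is attained by a measurable profile taking the
values `c 0, …, c N`. -/
theorem setLIntegral_legendreTrunc_le {K : Set X} (hK : IsCompact K) (hzero : h 0 = 0)
    {c : ℕ → ℝ} (hc0 : c 0 = 0) (hc : ∀ k, 0 ≤ c k) (hμ : Continuous μ)
    (hA : ∀ g : X → ℝ, (∀ x, 0 ≤ g x) → Integrable g m →
      Integrable (fun x => μ x * g x - h (g x)) m →
      ENNReal.ofReal (∫ x, μ x * g x - h (g x) ∂m) ≤ A) (N : ℕ) :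
    ∫⁻ x in K, ENNReal.ofReal (legendreTrunc h c N (μ x)) ∂m ≤ A := by
  obtain ⟨κ, hκ, hκ_max⟩ := exists_measurable_isMaxOn_range
    (fun x k => μ x * c k - h (c k)) (fun k => by fun_prop) N
  set g := K.indicator fun x => c (κ x)
  have hfg : (fun x => μ x * g x - h (g x)) = K.indicator fun x => legendreTrunc h c N (μ x) := by
    funext x
    by_cases hx : x ∈ K
    · simp [g, hx, legendreTrunc_eq_of_isMax (hκ_max x).1 (hκ_max x).2]
    · simp [g, hx, hzero]
  have hK_int : IntegrableOn (fun x => legendreTrunc h c N (μ x)) K m :=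
    ((continuous_legendreTrunc N).comp hμ).continuousOn.integrableOn_compact hK
  have hf : Integrable (fun x => μ x * g x - h (g x)) m := by
    rwa [hfg, integrable_indicator_iff hK.measurableSet]
  have hg : Integrable g m := by
    rw [integrable_indicator_iff hK.measurableSet]
    refine Measure.integrableOn_of_bounded hK.measure_lt_top.ne
      (measurable_from_nat.comp hκ).aestronglyMeasurable
      (M := (Finset.range (N + 1)).sup' Finset.nonempty_range_add_one c) (ae_of_all _ fun x => ?_)
    rw [Real.norm_of_nonneg (hc _)]
    exact Finset.le_sup' c (Finset.mem_range_succ_iff.2 (hκ_max x).1)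
  have hg0 : ∀ x, 0 ≤ g x := fun x => Set.indicator_nonneg (fun x _ => hc (κ x)) x
  calc ∫⁻ x in K, ENNReal.ofReal (legendreTrunc h c N (μ x)) ∂m
      = ENNReal.ofReal (∫ x in K, legendreTrunc h c N (μ x) ∂m) :=
        (ofReal_integral_eq_lintegral_ofReal hK_int
          (ae_of_all _ fun x => legendreTrunc_nonneg hzero hc0 N (μ x))).symm
    _ = ENNReal.ofReal (∫ x, μ x * g x - h (g x) ∂m) := by
        rw [hfg, integral_indicator hK.measurableSet]
    _ ≤ A := hA g hg0 hg hf

/-- The supremum over test profiles `g` may be taken inside the integral. -/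
theorem lintegral_legendre_comp_le [WeaklyLocallyCompactSpace X] [SigmaCompactSpace X]
    (hcont : ContinuousOn h (Ici 0)) (hzero : h 0 = 0) (hμ : Continuous μ)
    (hA : ∀ g : X → ℝ, (∀ x, 0 ≤ g x) → Integrable g m →
      Integrable (fun x => μ x * g x - h (g x)) m →
      ENNReal.ofReal (∫ x, μ x * g x - h (g x) ∂m) ≤ A) :
    ∫⁻ x, legendre h (μ x) ∂m ≤ A := by
  obtain ⟨c, hc0, hc, hleg⟩ := exists_seq_legendre_eq_iSup hcont
  let K := CompactExhaustion.choice X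
  let F : ℕ → X → ℝ≥0∞ := fun N =>
    (K N).indicator fun x => ENNReal.ofReal (legendreTrunc h c N (μ x))
  have hF_meas : ∀ N, Measurable (F N) := fun N =>
    (ENNReal.measurable_ofReal.comp ((continuous_legendreTrunc N).comp hμ).measurable).indicator
      (K.isCompact N).measurableSet
  have hF_mono : Monotone F := fun M N hMN =>
    Set.indicator_le_indicator_of_subset (K.subset hMN) (fun _ => zero_le) |>.trans
      fun x => Set.indicator_le_indicator
        (ENNReal.ofReal_le_ofReal (legendreTrunc_mono (μ x) hMN))
  have hF_iSup : ∀ x, ⨆ N, F N x = legendre h (μ x) := fun x => by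
    rw [← iSup_ofReal_legendreTrunc hc hleg]
    refine le_antisymm (iSup_mono fun N => Set.indicator_le_self _ _ x) (iSup_le fun N => ?_)
    obtain ⟨n, hn⟩ := K.exists_mem x
    refine le_iSup_of_le (max N n) ?_
    simp only [F, Set.indicator_of_mem (K.subset (le_max_right N n) hn)]
    exact ENNReal.ofReal_le_ofReal (legendreTrunc_mono (μ x) (le_max_left N n))
  calc ∫⁻ x, legendre h (μ x) ∂m = ⨆ N, ∫⁻ x, F N x ∂m := by
        simp_rw [← hF_iSup]; exact lintegral_iSup hF_meas hF_mono
    _ ≤ A := iSup_le fun N => by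
        rw [lintegral_indicator (K.isCompact N).measurableSet]
        exact setLIntegral_legendreTrunc_le m (K.isCompact N) hzero hc0 hc hμ hA N

end Interchange

section Reduction

variable {Φ : ℝ → ℝ}

def profileEnergies (Φ : ℝ → ℝ) (s : ℝ) : Set ℝ :=
  { r : ℝ | ∃ g : R3 → ℝ, (∀ v, 0 ≤ g v) ∧ Integrable g ∧ (∫ v, g v) = s ∧
    Integrable (fun v => (1/2) * ‖v‖ ^ 2 * g v + Φ (g v)) ∧
    r = ∫ v, ((1/2) * ‖v‖ ^ 2 * g v + Φ (g v)) }

theorem psiOf_eq_sInf (s : ℝ) : PsiOf Φ s = sInf (profileEnergies Φ s) := rfl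

theorem profileEnergies_nonempty (hzero : Φ 0 = 0) {s : ℝ} (hs : 0 ≤ s) :
    (profileEnergies Φ s).Nonempty := by
  let B := Metric.closedBall (0 : R3) 1
  have hB : MeasurableSet B := measurableSet_closedBall
  have hvol : 0 < volume.real B :=
    ENNReal.toReal_pos (Metric.measure_closedBall_pos volume 0 one_pos).ne'
      measure_closedBall_lt_top.ne
  let g := B.indicator fun _ => s / volume.real B
  have hE : (fun v : R3 => (1/2) * ‖v‖ ^ 2 * g v + Φ (g v))
      = B.indicator fun v => (1/2) * ‖v‖ ^ 2 * (s / volume.real B) + Φ (s / volume.real B) := by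
    funext v
    by_cases hv : v ∈ B <;> simp [g, hv, hzero]
  refine ⟨_, g, Set.indicator_nonneg (fun _ _ => by positivity),
    (integrable_indicator_iff hB).2 (integrableOn_const measure_closedBall_lt_top.ne), ?_, ?_, rfl⟩
  · rw [integral_indicator_const _ hB, smul_eq_mul]
    field_simp
  · rw [hE, integrable_indicator_iff hB]
    exact (Continuous.continuousOn (by fun_prop)).integrableOn_compact (isCompact_closedBall _ _)

theorem psiOf_le_integral (hnonneg : ∀ s ∈ Ici (0:ℝ), 0 ≤ Φ s) {g : R3 → ℝ}
    (hg0 : ∀ v, 0 ≤ g v) (hg : Integrable g)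
    (hE : Integrable (fun v => (1/2) * ‖v‖ ^ 2 * g v + Φ (g v))) :
    PsiOf Φ (∫ v, g v) ≤ ∫ v, ((1/2) * ‖v‖ ^ 2 * g v + Φ (g v)) := by
  refine csInf_le ⟨0, ?_⟩ ⟨g, hg0, hg, rfl, hE, rfl⟩
  rintro _ ⟨g', hg'0, -, -, -, rfl⟩
  exact integral_nonneg fun v => add_nonneg (by have := hg'0 v; positivity) (hnonneg _ (hg'0 v))

theorem integral_legendre_integrand (Φ : ℝ → ℝ) (l : ℝ) {g : R3 → ℝ} (hg : Integrable g)
    (hE : Integrable (fun v => (1/2) * ‖v‖ ^ 2 * g v + Φ (g v))) :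
    ∫ v, (l - (1/2) * ‖v‖ ^ 2) * g v - Φ (g v)
      = l * (∫ v, g v) - ∫ v, ((1/2) * ‖v‖ ^ 2 * g v + Φ (g v)) := by
  rw [← integral_const_mul, ← integral_sub (hg.const_mul l) hE]
  congr 1 with v
  ring

theorem ofReal_integral_le_legendre_psiOf (hnonneg : ∀ s ∈ Ici (0:ℝ), 0 ≤ Φ s) (l : ℝ)
    {g : R3 → ℝ} (hg0 : ∀ v, 0 ≤ g v) (hg : Integrable g)
    (hf : Integrable fun v => (l - (1/2) * ‖v‖ ^ 2) * g v - Φ (g v)) :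
    ENNReal.ofReal (∫ v, (l - (1/2) * ‖v‖ ^ 2) * g v - Φ (g v)) ≤ legendre (PsiOf Φ) l := by
  have hE : Integrable (fun v => (1/2) * ‖v‖ ^ 2 * g v + Φ (g v)) :=
    ((hg.const_mul l).sub hf).congr (ae_of_all _ fun v => by simp only [Pi.sub_apply]; ring)
  rw [integral_legendre_integrand Φ l hg hE]
  exact (ENNReal.ofReal_le_ofReal (sub_le_sub_left (psiOf_le_integral hnonneg hg0 hg hE) _)).trans
    (ofReal_sub_le_legendre _ l (integral_nonneg hg0))

theorem legendre_psiOf_le_lintegral (hzero : Φ 0 = 0) (l : ℝ) :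
    legendre (PsiOf Φ) l ≤ ∫⁻ v : R3, legendre Φ (l - (1/2) * ‖v‖ ^ 2) := by
  refine iSup_le fun ⟨s, hs⟩ => ENNReal.le_of_forall_pos_le_add fun ε hε _ => ?_
  obtain ⟨_, ⟨g, hg0, hg, rfl, hE, rfl⟩, hlt⟩ :=
    Real.lt_sInf_add_pos (profileEnergies_nonempty hzero hs) (ε := ε) hε
  have hf : Integrable fun v => (l - (1/2) * ‖v‖ ^ 2) * g v - Φ (g v) :=
    ((hg.const_mul l).sub hE).congr (ae_of_all _ fun v => by simp only [Pi.sub_apply]; ring)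
  calc ENNReal.ofReal (l * (∫ v, g v) - PsiOf Φ (∫ v, g v))
      ≤ ENNReal.ofReal ((∫ v, (l - (1/2) * ‖v‖ ^ 2) * g v - Φ (g v)) + ε) := by
        rw [integral_legendre_integrand Φ l hg hE, psiOf_eq_sInf]
        rw [sub_add]
        exact ENNReal.ofReal_le_ofReal (sub_le_sub_left (sub_le_iff_le_add.2 hlt.le) _)
    _ ≤ ENNReal.ofReal (∫ v, (l - (1/2) * ‖v‖ ^ 2) * g v - Φ (g v)) + ε :=
        ENNReal.ofReal_add_le.trans_eq (by rw [ENNReal.ofReal_coe_nnreal])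
    _ ≤ (∫⁻ v : R3, legendre Φ (l - (1/2) * ‖v‖ ^ 2)) + ε :=
        add_le_add_left (ofReal_integral_le_lintegral_legendre volume Φ _ hg0 hf) _

end Reduction

theorem legendre_reduction_general
    (Φ : ℝ → ℝ) (hcont : ContinuousOn Φ (Ici 0))
    (hzero : Φ 0 = 0) (hnonneg : ∀ s ∈ Ici (0:ℝ), 0 ≤ Φ s) :
    ∀ l : ℝ, legendre (PsiOf Φ) l = ∫⁻ v : R3, legendre Φ (l - (1/2) * ‖v‖ ^ 2) := fun l =>
  le_antisymm (legendre_psiOf_le_lintegral hzero l)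
    (lintegral_legendre_comp_le volume hcont hzero (by fun_prop) fun _ hg0 hg hf =>
      ofReal_integral_le_legendre_psiOf hnonneg l hg0 hg hf)

/-- the Legendre transforms of `Φ` and of the reduced function `Ψ`
satisfy `Ψ̄(λ) = ∫ Φ̄(λ - (1/2)|v|²) dv`. -/
theorem legendre_reduction
    (Φ : ℝ → ℝ) (hcont : ContinuousOn Φ (Ici 0)) (hconv : ConvexOn ℝ (Ici 0) Φ)
    (hzero : Φ 0 = 0) (hnonneg : ∀ s ∈ Ici (0:ℝ), 0 ≤ Φ s) :
    ∀ l : ℝ, legendre (PsiOf Φ) l = ∫⁻ v : R3, legendre Φ (l - (1/2) * ‖v‖ ^ 2) :=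
  legendre_reduction_general Φ hcont hzero hnonneg
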